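/- arXiv:1511.02664 — 3 statements merged into one kernel-verified Lean document; each statement's English description precedes it below -/
import Mathlib

section
/- Let $\Gamma$ be a non-elementary discrete isometry group of a proper geodesic $\delta$-hyperbolic space, and let $\mu$ be an $s$-dimensional $\Gamma$-quasi-invariant quasiconformal measure on $\partial X$ for which the shadow lemma holds (i.e., $L^{-1}a^{-sd(o,\gamma^{-1}o)}\le\mu(S_o(\gamma^{-1}o,r))\le L a^{2rs}a^{-sd(o,\gamma^{-1}o)}$ for $r\ge r_0$). If the Poincaré series $P^s_\Gamma(o,o)=\sum_{\gamma\in\Gamma}a^{-sd(o,\gamma o)}$ converges, then $\mu(\Lambda_c(\Gamma))=0$, where $\Lambda_c(\Gamma)$ is the conical limit set. -/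
open Metric MeasureTheory
open scoped ENNReal

/-!
Borel–Cantelli. By the shadow lemma, `μ(S_o(γ⁻¹o, r)) ≲ a^{-s d(o, γ⁻¹o)} = a^{-s d(o, γo)}`,
so for every radius `r` the shadow measures are dominated by the terms of the convergent Poincaré
series, and a.e. point lies in only finitely many shadows of radius `r`. Taking the countably many
radii `r₀ + n` covers every conical limit point. Countability of `Γ` comes for free: the Poincaré
series is a convergent sum of positive terms.
-/

/-- The shadow `S_ω(x,r)` with light source `ω` in the bordification. -/
def shadow {X B : Type*} [MetricSpace X] (geo : X ⊕ B → X ⊕ B → Set (Set X))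
    (ω : X ⊕ B) (x : X) (r : ℝ) : Set B :=
  {ξ | ∀ g ∈ geo ω (Sum.inr ξ), ∃ p ∈ g, dist p x ≤ r}

lemma shadow_mono {X B : Type*} [MetricSpace X] (geo : X ⊕ B → X ⊕ B → Set (Set X))
    (ω : X ⊕ B) (x : X) {ρ r : ℝ} (h : ρ ≤ r) :
    shadow geo ω x ρ ⊆ shadow geo ω x r := fun _ hξ g hg ↦
  let ⟨p, hp, hd⟩ := hξ g hg
  ⟨p, hp, hd.trans h⟩

lemma IsometryEquiv.dist_symm_apply {X : Type*} [MetricSpace X] (e : X ≃ᵢ X) (x : X) :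
    dist x (e.symm x) = dist x (e x) := by
  rw [← e.dist_eq, e.apply_symm_apply, dist_comm]

lemma countable_of_tsum_ne_top {ι : Type*} {f : ι → ℝ≥0∞} (h : ∑' i, f i ≠ ∞)
    (hf : ∀ i, f i ≠ 0) : Countable ι := by
  have : Function.support f = Set.univ := Set.eq_univ_of_forall hf
  exact Set.countable_univ_iff.1 (this ▸ Summable.countable_support_ennreal h)

lemma tsum_measure_ne_top_of_le_poincare_term {X B : Type*} [MetricSpace X] [MeasurableSpace B]
    {o : X} {Γ : Subgroup (X ≃ᵢ X)} {μ : Measure B} {t : Γ → Set B} {s a C : ℝ} (ha : 0 < a)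
    (ht : ∀ γ : Γ, μ (t γ) ≤ ENNReal.ofReal (C * a ^ (-(s * dist o ((γ : X ≃ᵢ X).symm o)))))
    (hconv : ∑' γ : Γ, ENNReal.ofReal (a ^ (-(s * dist o ((γ : X ≃ᵢ X) o)))) ≠ ∞) :
    ∑' γ : Γ, μ (t γ) ≠ ∞ := by
  refine ne_top_of_le_ne_top (ENNReal.mul_ne_top (ENNReal.ofReal_ne_top (r := C)) hconv) ?_
  rw [← ENNReal.tsum_mul_left]
  refine ENNReal.tsum_le_tsum fun γ ↦ (ht γ).trans_eq ?_
  rw [IsometryEquiv.dist_symm_apply, ENNReal.ofReal_mul' (Real.rpow_nonneg ha.le _)]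

theorem conical_limit_null_of_convergence_general {X B : Type*} [MetricSpace X]
    [MeasurableSpace B] (o : X)
    (geo : X ⊕ B → X ⊕ B → Set (Set X))
    (Γ : Subgroup (X ≃ᵢ X))
    (μ : Measure B)
    (s a : ℝ) (ha : 1 < a)
    (L r₀ : ℝ)
    -- the shadow lemma for `μ`:
    (hshadow : ∀ r ≥ r₀, ∀ γ : Γ,
      ENNReal.ofReal (L⁻¹ * a ^ (-(s * dist o ((γ : X ≃ᵢ X).symm o)))) ≤
        μ (shadow geo (Sum.inl o) ((γ : X ≃ᵢ X).symm o) r) ∧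
      μ (shadow geo (Sum.inl o) ((γ : X ≃ᵢ X).symm o) r) ≤
        ENNReal.ofReal (L * a ^ (2 * r * s) * a ^ (-(s * dist o ((γ : X ≃ᵢ X).symm o)))))
    -- convergence of the Poincaré series at exponent `s`:
    (hconv : ∑' γ : Γ, ENNReal.ofReal (a ^ (-(s * dist o ((γ : X ≃ᵢ X) o)))) < ⊤)
    (Λc : Set B)
    -- every conical limit point lies in infinitely many shadows of some fixed radius:
    (hΛ : ∀ ξ ∈ Λc, ∃ ρ > (0:ℝ),
      {γ : Γ | ξ ∈ shadow geo (Sum.inl o) ((γ : X ≃ᵢ X).symm o) ρ}.Infinite) :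
    μ Λc = 0 := by
  have ha₀ : 0 < a := zero_lt_one.trans ha
  have : Countable Γ := countable_of_tsum_ne_top hconv.ne fun γ ↦
    (ENNReal.ofReal_pos.2 (Real.rpow_pos_of_pos ha₀ _)).ne'
  have hfinite : ∀ᵐ ξ ∂μ, ∀ n : ℕ,
      {γ : Γ | ξ ∈ shadow geo (Sum.inl o) ((γ : X ≃ᵢ X).symm o) (r₀ + n)}.Finite :=
    ae_all_iff.2 fun n ↦ ae_finite_setOfPred_mem <| tsum_measure_ne_top_of_le_poincare_term ha₀
      (fun γ ↦ (hshadow (r₀ + n) (le_add_of_nonneg_right n.cast_nonneg) γ).2) hconv.ne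
  rw [measure_eq_zero_iff_ae_notMem]
  filter_upwards [hfinite] with ξ hξ hΛξ
  obtain ⟨ρ, -, hinf⟩ := hΛ ξ hΛξ
  refine hinf ((hξ ⌈ρ - r₀⌉₊).subset fun γ hγ ↦ shadow_mono geo _ _ ?_ hγ)
  linarith [Nat.le_ceil (ρ - r₀)]

/-- Proposition 2.10 of the paper (Borel–Cantelli): let `Γ` be a non-elementary
discrete isometry group and `μ` an `s`-dimensional `Γ`-quasi-invariant
quasiconformal measure on the boundary `B` for which the shadow lemma holds.
If the Poincaré series of `Γ` at exponent `s` converges, then the conical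
limit set `Λc` (every point of which lies in infinitely many shadows
`S_o(γ⁻¹ o, ρ)` for some `ρ > 0`) is `μ`-null. -/
theorem conical_limit_null_of_convergence {X B : Type*} [MetricSpace X]
    [MeasurableSpace B] (o : X)
    (geo : X ⊕ B → X ⊕ B → Set (Set X))
    (Γ : Subgroup (X ≃ᵢ X))
    -- discreteness of `Γ`:
    (hdisc : ∀ R : ℝ, {γ : Γ | dist o ((γ : X ≃ᵢ X) o) ≤ R}.Finite)
    (μ : Measure B) [IsFiniteMeasure μ]
    (s a : ℝ) (hs : 0 ≤ s) (ha : 1 < a)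
    (L r₀ : ℝ) (hL : 1 ≤ L) (hr₀ : 0 < r₀)
    -- the shadow lemma for `μ`:
    (hshadow : ∀ r ≥ r₀, ∀ γ : Γ,
      ENNReal.ofReal (L⁻¹ * a ^ (-(s * dist o ((γ : X ≃ᵢ X).symm o)))) ≤
        μ (shadow geo (Sum.inl o) ((γ : X ≃ᵢ X).symm o) r) ∧
      μ (shadow geo (Sum.inl o) ((γ : X ≃ᵢ X).symm o) r) ≤
        ENNReal.ofReal (L * a ^ (2 * r * s) * a ^ (-(s * dist o ((γ : X ≃ᵢ X).symm o)))))
    -- convergence of the Poincaré series at exponent `s`: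
    (hconv : ∑' γ : Γ, ENNReal.ofReal (a ^ (-(s * dist o ((γ : X ≃ᵢ X) o)))) < ⊤)
    (Λc : Set B)
    -- every conical limit point lies in infinitely many shadows of some fixed radius:
    (hΛ : ∀ ξ ∈ Λc, ∃ ρ > (0:ℝ),
      {γ : Γ | ξ ∈ shadow geo (Sum.inl o) ((γ : X ≃ᵢ X).symm o) ρ}.Infinite) :
    μ Λc = 0 :=
  conical_limit_null_of_convergence_general o geo Γ μ s a ha L r₀ hshadow hconv Λc hΛ
end

section
/- Let $G$ be a discrete isometry group of a proper geodesic $\delta$-hyperbolic space, $h\in G$ a hyperbolic element. For each coset $[g]\in\langle h\rangle\backslash G$ set $d(o,[g](o))=\inf_{n\in\mathbb Z} d(o,h^n g(o))$. Then for every $s>0$ there is a constant $A_h(s)>0$ (depending only on $s$, $h$, $\delta$, $a$) such that $\sum_{g\in G} a^{-s d(o,g(o))}\;\le\; A_h(s)\sum_{[g]\in\langle h\rangle\backslash G} a^{-s d(o,[g](o))}$. -/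
/-!
By Fekete's lemma the displacements `d(o, hⁿ o)` grow like `σ |n|`, where the stable translation
length `σ` is positive by the quasi-geodesic lower bound; so the orbit `n ↦ h⁻ⁿ o` satisfies
`σ |i - j| ≤ d ≤ (5/4) σ |i - j| + C`. In a `δ`-hyperbolic space such an almost geodesic line
moves away linearly from a point of it nearest to `g o`, so along the coset `⟨h⟩ g` the terms
`a^(-s d(o, hⁿ g o))` are bounded by `a^(-s D[g])` times a geometric series in `|n - n₁|`.
Summing over the cosets gives the bound.
-/

open scoped ENNReal
open Filter Topology

section Gromov

variable {X : Type*} [PseudoMetricSpace X]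

noncomputable def gromovProduct (w x y : X) : ℝ := (dist x w + dist y w - dist x y) / 2

def IsGromovHyperbolic (δ : ℝ) (X : Type*) [PseudoMetricSpace X] : Prop :=
  ∀ x y z w : X, min (gromovProduct w x y) (gromovProduct w y z) - δ ≤ gromovProduct w x z

variable {δ σ C ε : ℝ}

/-- Apply the four-point condition to `y`, `Q m`, `Q (m / 2)` at `Q 0`: since `Q 0` is nearly
nearest to `y`, `(y | Q (m / 2))` is at most about `5σm/16`, while `(Q m | Q (m / 2))` is about
`σm/2`; hence `(y | Q m) ≲ 5σm/16`, and `d(Q m, y) = d(Q 0, y) + d(Q 0, Q m) - 2 (y | Q m)`. -/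
theorem IsGromovHyperbolic.dist_ray_ge (hX : IsGromovHyperbolic δ X) (hδ : 0 ≤ δ) (hσ : 0 ≤ σ)
    (hC : 0 ≤ C) (hε : 0 ≤ ε) {Q : ℕ → X} {y : X}
    (hlow : ∀ i j : ℕ, σ * |(i : ℝ) - j| ≤ dist (Q i) (Q j))
    (hup : ∀ i j : ℕ, dist (Q i) (Q j) ≤ 5 / 4 * σ * |(i : ℝ) - j| + C)
    (hnear : ∀ j, dist (Q 0) y ≤ dist (Q j) y + ε) (m : ℕ) :
    dist (Q 0) y + σ / 4 * m - 6 * (σ + C + ε + δ) ≤ dist (Q m) y := by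
  set j := m / 2
  have hj_half : (2 * j : ℝ) ≤ m ∧ (m : ℝ) ≤ 2 * j + 1 := by
    constructor <;> norm_cast <;> omega
  have hσj_half : 2 * (σ * j) ≤ σ * m ∧ σ * m ≤ 2 * (σ * j) + σ := by
    constructor <;> nlinarith
  have h0m := hlow 0 m
  have h0j := hlow 0 j
  have h0m' := hup 0 m
  have h0j' := hup 0 j
  have hjm := hup j m
  simp only [Nat.cast_zero, zero_sub, abs_neg, Nat.abs_cast] at h0m h0j h0m' h0j'
  rw [abs_sub_comm, abs_of_nonneg (by linarith)] at hjm
  have hfour := hX y (Q m) (Q j) (Q 0)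
  have hj_near := hnear j
  have hm_near := hnear m
  simp only [gromovProduct, dist_comm y, dist_comm (Q m) (Q 0), dist_comm (Q j) (Q 0),
    dist_comm (Q m) (Q j)] at hfour
  rcases le_total (dist (Q 0) y + dist (Q 0) (Q m) - dist (Q m) y)
      (dist (Q 0) (Q m) + dist (Q 0) (Q j) - dist (Q j) (Q m)) with hAB | hAB
  · rw [min_eq_left (by linarith)] at hfour
    linarith
  · rw [min_eq_right (by linarith)] at hfour
    linarith

theorem IsGromovHyperbolic.dist_line_ge (hX : IsGromovHyperbolic δ X) (hδ : 0 ≤ δ) (hσ : 0 ≤ σ)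
    (hC : 0 ≤ C) (hε : 0 ≤ ε) {P : ℤ → X} {y : X}
    (hlow : ∀ i j : ℤ, σ * |(i : ℝ) - j| ≤ dist (P i) (P j))
    (hup : ∀ i j : ℤ, dist (P i) (P j) ≤ 5 / 4 * σ * |(i : ℝ) - j| + C)
    {n₀ : ℤ} (hnear : ∀ n, dist (P n₀) y ≤ dist (P n) y + ε) (n : ℤ) :
    dist (P n₀) y + σ / 4 * |(n : ℝ) - n₀| - 6 * (σ + C + ε + δ) ≤ dist (P n) y := by
  have ray (e : ℤ) (he : |(e : ℝ)| = 1) (m : ℕ) :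
      dist (P n₀) y + σ / 4 * m - 6 * (σ + C + ε + δ) ≤ dist (P (n₀ + e * m)) y := by
    have hdiff (i j : ℕ) : |((n₀ + e * i : ℤ) : ℝ) - (n₀ + e * j : ℤ)| = |(i : ℝ) - j| := by
      push_cast
      rw [show (n₀ : ℝ) + e * i - (n₀ + e * j) = e * (i - j) by ring, abs_mul, he, one_mul]
    simpa using hX.dist_ray_ge hδ hσ hC hε (Q := fun i => P (n₀ + e * i))
      (fun i j => hdiff i j ▸ hlow _ _) (fun i j => hdiff i j ▸ hup _ _)
      (fun j => by simpa using hnear _) m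
  have habs : |(n : ℝ) - n₀| = (n - n₀).natAbs := by
    rw [Nat.cast_natAbs, Int.cast_abs, Int.cast_sub]
  rw [habs]
  rcases Int.natAbs_eq (n - n₀) with hn | hn
  · convert ray 1 (by simp) (n - n₀).natAbs using 4
    linear_combination hn
  · convert ray (-1) (by simp) (n - n₀).natAbs using 4
    linear_combination hn

end Gromov

namespace Subadditive

variable {u : ℕ → ℝ} (hu : Subadditive u)

theorem lim_mul_le (hbdd : BddBelow (Set.range fun n => u n / n)) (h0 : 0 ≤ u 0) (n : ℕ) :
    hu.lim * n ≤ u n := by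
  rcases eq_or_ne n 0 with rfl | hn
  · simpa using h0
  · exact (le_div_iff₀ (by positivity)).1 (hu.lim_le_div hbdd hn)

theorem le_lim (hbdd : BddBelow (Set.range fun n => u n / n)) {t c : ℝ}
    (h : ∀ n : ℕ, t * n - c ≤ u n) : t ≤ hu.lim := by
  have hlow : Tendsto (fun n : ℕ => t - c / n) atTop (𝓝 t) := by
    simpa using tendsto_const_nhds.sub (tendsto_const_div_atTop_nhds_zero_nat c)
  refine le_of_tendsto_of_tendsto hlow (hu.tendsto_lim hbdd) ?_
  filter_upwards [eventually_gt_atTop 0] with n hn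
  rw [show t - c / n = (t * n - c) / n by field_simp]
  gcongr
  exact h n

theorem exists_le_mul_add (hbdd : BddBelow (Set.range fun n => u n / n)) {L : ℝ}
    (hL : hu.lim < L) (hL0 : 0 ≤ L) :
    ∃ C, ∀ n : ℕ, u n ≤ L * n + C := by
  obtain ⟨k, hkL, hk⟩ := (((hu.tendsto_lim hbdd).eventually (gt_mem_nhds hL)).and
    (eventually_gt_atTop 0)).exists
  have hkL' : u k ≤ L * k := by
    rw [div_lt_iff₀ (by positivity)] at hkL; linarith
  refine ⟨k * |u 1| + |u 0|, fun n => ?_⟩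
  have hdiv := hu.apply_mul_add_le (n / k) k (n % k)
  have hmod := hu.apply_mul_add_le (n % k) 1 0
  rw [Nat.div_add_mod'] at hdiv
  simp only [mul_one, add_zero] at hmod
  have hq : ((n / k : ℕ) : ℝ) * k ≤ n := by exact_mod_cast Nat.div_mul_le_self n k
  have hr : ((n % k : ℕ) : ℝ) ≤ k := by exact_mod_cast (Nat.mod_lt n hk).le
  have h1 : ((n / k : ℕ) : ℝ) * u k ≤ L * n := by
    calc ((n / k : ℕ) : ℝ) * u k ≤ (n / k : ℕ) * (L * k) := by gcongr
      _ ≤ L * n := by nlinarith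
  have h2 : ((n % k : ℕ) : ℝ) * u 1 ≤ k * |u 1| := by
    calc ((n % k : ℕ) : ℝ) * u 1 ≤ (n % k : ℕ) * |u 1| := by gcongr; exact le_abs_self _
      _ ≤ k * |u 1| := by gcongr
  linarith [le_abs_self (u 0)]

end Subadditive

section Orbit

variable {X G : Type*} [PseudoMetricSpace X] [Group G] [MulAction G X]

theorem not_isOfFinOrder_of_mul_abs_le_dist {σ : ℝ} (hσ : 0 < σ) (o : X) {h : G}
    (hlow : ∀ n : ℤ, σ * |(n : ℝ)| ≤ dist o (h ^ n • o)) : ¬IsOfFinOrder h := by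
  rw [← injective_zpow_iff_not_isOfFinOrder]
  intro m n hmn
  have hm := hlow (m - n)
  rw [zpow_sub, show h ^ m = h ^ n from hmn, mul_inv_cancel, one_smul, dist_self] at hm
  have : |((m - n : ℤ) : ℝ)| = 0 := le_antisymm (by nlinarith [abs_nonneg ((m - n : ℤ) : ℝ)])
    (abs_nonneg _)
  have : m - n = 0 := by exact_mod_cast abs_eq_zero.1 this
  omega

variable [IsIsometricSMul G X]

theorem dist_inv_smul_left (g : G) (x y : X) : dist (g⁻¹ • x) y = dist x (g • y) := by
  rw [← dist_smul g, smul_inv_smul]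

theorem dist_zpow_inv_smul (o : X) (h : G) (i j : ℤ) :
    dist ((h ^ i)⁻¹ • o) ((h ^ j)⁻¹ • o) = dist o (h ^ (i - j) • o) := by
  rw [dist_inv_smul_left, smul_smul, ← zpow_sub]

theorem subadditive_dist_pow_smul (o : X) (h : G) : Subadditive fun n : ℕ => dist o (h ^ n • o) :=
  fun m n => calc
    dist o (h ^ (m + n) • o) ≤ dist o (h ^ m • o) + dist (h ^ m • o) (h ^ (m + n) • o) :=
      dist_triangle _ _ _
    _ = dist o (h ^ m • o) + dist o (h ^ n • o) := by rw [pow_add, mul_smul, dist_smul]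

theorem dist_zpow_smul_eq_natAbs (o : X) (h : G) (n : ℤ) :
    dist o (h ^ n • o) = dist o (h ^ n.natAbs • o) := by
  obtain ⟨m, rfl | rfl⟩ := Int.eq_nat_or_neg n
  · simp
  · rw [Int.natAbs_neg, Int.natAbs_natCast, zpow_neg, zpow_natCast, dist_comm,
      dist_inv_smul_left]

theorem exists_dist_zpow_smul_bounds {t c : ℝ} (ht : 0 < t) (o : X) (h : G)
    (hqg : ∀ n : ℤ, t * |(n : ℝ)| - c ≤ dist o (h ^ n • o)) :
    ∃ σ > 0, ∃ C ≥ 0, ∀ n : ℤ,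
      σ * |(n : ℝ)| ≤ dist o (h ^ n • o) ∧ dist o (h ^ n • o) ≤ 5 / 4 * σ * |(n : ℝ)| + C := by
  have hv := subadditive_dist_pow_smul o h
  have hbdd : BddBelow (Set.range fun n : ℕ => dist o (h ^ n • o) / n) :=
    ⟨0, by rintro _ ⟨n, rfl⟩; positivity⟩
  have hσ : t ≤ hv.lim := hv.le_lim hbdd (c := c) fun n => by simpa using hqg n
  obtain ⟨C, hC⟩ := hv.exists_le_mul_add hbdd (L := 5 / 4 * hv.lim) (by linarith) (by linarith)
  have hC0 : 0 ≤ C := by simpa using hC 0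
  refine ⟨hv.lim, by linarith, C, hC0, fun n => ?_⟩
  have habs : |(n : ℝ)| = n.natAbs := by rw [Nat.cast_natAbs, Int.cast_abs]
  rw [dist_zpow_smul_eq_natAbs, habs]
  exact ⟨by linarith [hv.lim_mul_le hbdd dist_nonneg n.natAbs], by linarith [hC n.natAbs]⟩

variable {δ σ C : ℝ}

theorem IsGromovHyperbolic.exists_le_dist_zpow_mul_smul (hX : IsGromovHyperbolic δ X)
    (hδ : 0 ≤ δ) (hσ : 0 ≤ σ) (hC : 0 ≤ C) (o : X) (h : G)
    (hu : ∀ n : ℤ,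
      σ * |(n : ℝ)| ≤ dist o (h ^ n • o) ∧ dist o (h ^ n • o) ≤ 5 / 4 * σ * |(n : ℝ)| + C)
    (g : G) : ∃ n₁ : ℤ, ∀ n : ℤ,
      (⨅ m : ℤ, dist o ((h ^ m * g) • o)) + σ / 4 * |(n : ℝ) - n₁| - 6 * (σ + C + 1 + δ) ≤
        dist o ((h ^ n * g) • o) := by
  have hbdd : BddBelow (Set.range fun m : ℤ => dist o ((h ^ m * g) • o)) :=
    ⟨0, by rintro _ ⟨m, rfl⟩; exact dist_nonneg⟩
  obtain ⟨n₁, hn₁⟩ := exists_lt_of_ciInf_lt (lt_add_one (⨅ m : ℤ, dist o ((h ^ m * g) • o)))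
  have hP (n : ℤ) : dist ((h ^ n)⁻¹ • o) (g • o) = dist o ((h ^ n * g) • o) := by
    rw [dist_inv_smul_left, mul_smul]
  have habs (i j : ℤ) : |((i - j : ℤ) : ℝ)| = |(i : ℝ) - j| := by push_cast; rfl
  refine ⟨n₁, fun n => ?_⟩
  have hline := hX.dist_line_ge hδ hσ hC zero_le_one (P := fun n => (h ^ n)⁻¹ • o) (y := g • o)
    (fun i j => by simpa [dist_zpow_inv_smul, habs] using (hu (i - j)).1)
    (fun i j => by simpa [dist_zpow_inv_smul, habs] using (hu (i - j)).2)
    (n₀ := n₁) (fun m => by simp only [hP]; linarith [ciInf_le hbdd m]) n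
  simp only [hP] at hline
  linarith [ciInf_le hbdd n₁]

end Orbit

theorem ENNReal.tsum_pow_natAbs_sub (r : ℝ≥0∞) (n₁ : ℤ) :
    ∑' n : ℤ, r ^ (n - n₁).natAbs = (1 + r) * (1 - r)⁻¹ := by
  have hneg (n : ℕ) : (-((n : ℤ) + 1)).natAbs = n + 1 := by omega
  rw [show ∑' n : ℤ, r ^ (n - n₁).natAbs = ∑' n : ℤ, r ^ n.natAbs from
      (Equiv.subRight n₁).tsum_eq (fun n : ℤ => r ^ n.natAbs),
    tsum_of_nat_of_neg_add_one ENNReal.summable ENNReal.summable]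
  simp only [hneg, Int.natAbs_natCast, ENNReal.tsum_geometric, ENNReal.tsum_geometric_add_one]
  ring

theorem tsum_ofReal_rpow_neg_le {a s σ D K : ℝ} (ha : 1 ≤ a) (hs : 0 ≤ s) {f : ℤ → ℝ} (n₁ : ℤ)
    (hf : ∀ n : ℤ, D + σ * |(n : ℝ) - n₁| - K ≤ f n) :
    ∑' n : ℤ, ENNReal.ofReal (a ^ (-(s * f n))) ≤
      ENNReal.ofReal (a ^ (s * K)) *
          ((1 + ENNReal.ofReal (a ^ (-(s * σ)))) * (1 - ENNReal.ofReal (a ^ (-(s * σ))))⁻¹) *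
        ENNReal.ofReal (a ^ (-(s * D))) := by
  have ha0 : 0 < a := by linarith
  have hterm (n : ℤ) : ENNReal.ofReal (a ^ (-(s * f n))) ≤
      ENNReal.ofReal (a ^ (s * K)) * ENNReal.ofReal (a ^ (-(s * D))) *
        ENNReal.ofReal (a ^ (-(s * σ))) ^ (n - n₁).natAbs := by
    have habs : |(n : ℝ) - n₁| = (n - n₁).natAbs := by
      rw [Nat.cast_natAbs, Int.cast_abs, Int.cast_sub]
    rw [← ENNReal.ofReal_mul (by positivity), ← ENNReal.ofReal_pow (by positivity),
      ← ENNReal.ofReal_mul (by positivity), ← Real.rpow_natCast, ← Real.rpow_mul ha0.le,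
      ← Real.rpow_add ha0, ← Real.rpow_add ha0, ← habs]
    gcongr
    nlinarith [hf n]
  calc ∑' n : ℤ, ENNReal.ofReal (a ^ (-(s * f n)))
      ≤ ∑' n : ℤ, ENNReal.ofReal (a ^ (s * K)) * ENNReal.ofReal (a ^ (-(s * D))) *
          ENNReal.ofReal (a ^ (-(s * σ))) ^ (n - n₁).natAbs := ENNReal.tsum_le_tsum hterm
    _ ≤ ENNReal.ofReal (a ^ (s * K)) * ENNReal.ofReal (a ^ (-(s * D))) *
          ((1 + ENNReal.ofReal (a ^ (-(s * σ)))) * (1 - ENNReal.ofReal (a ^ (-(s * σ))))⁻¹) := by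
      rw [ENNReal.tsum_mul_left, ENNReal.tsum_pow_natAbs_sub]
    _ = _ := by ring

theorem tsum_eq_tsum_quotient_rightRel_zpowers {G : Type*} [Group G] {h : G}
    (hh : ¬IsOfFinOrder h) (f : G → ℝ≥0∞) :
    ∑' g, f g = ∑' q : Quotient (QuotientGroup.rightRel (Subgroup.zpowers h)),
      ∑' n : ℤ, f (h ^ n * q.out) := by
  rw [← ENNReal.tsum_fiberwise f (Quotient.mk (QuotientGroup.rightRel (Subgroup.zpowers h)))]
  refine tsum_congr fun q => ?_
  have hmem (n : ℤ) :
      h ^ n * q.out ∈ Quotient.mk (QuotientGroup.rightRel (Subgroup.zpowers h)) ⁻¹' {q} := by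
    rw [Set.mem_preimage, Set.mem_singleton_iff]
    conv_rhs => rw [← q.out_eq]
    refine Quotient.sound (QuotientGroup.rightRel_apply.2 (Subgroup.mem_zpowers_iff.2 ⟨-n, ?_⟩))
    group
  refine ((Equiv.ofBijective (Set.codRestrict _ _ hmem) ⟨?_, fun g => ?_⟩).tsum_eq
    (fun g => f g)).symm
  · exact (Set.injective_codRestrict hmem).2
      ((mul_left_injective q.out).comp (injective_zpow_iff_not_isOfFinOrder.2 hh))
  · obtain ⟨n, hn⟩ := Subgroup.mem_zpowers_iff.1
      (QuotientGroup.rightRel_apply.1 (Quotient.exact (g.2.trans q.out_eq.symm)))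
    refine ⟨-n, Subtype.ext ?_⟩
    show h ^ (-n) * q.out = g
    rw [zpow_neg, hn]
    group

theorem coset_poincare_series_bound_general {X : Type*} [MetricSpace X]
    {G : Type*} [Group G] [MulAction G X]
    (hiso : ∀ g : G, Isometry (fun x : X => g • x))
    (o : X)
    (δ : ℝ) (hδ : 0 ≤ δ)
    (hhyp : ∀ x y z w : X,
      min ((dist x w + dist y w - dist x y) / 2)
          ((dist y w + dist z w - dist y z) / 2) - δ ≤
        (dist x w + dist z w - dist x z) / 2)
    (h : G) (ℓ lam c : ℝ) (hℓpos : 0 < ℓ)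
    (hlam : 1 ≤ lam)
    (hqg : ∀ n : ℤ, lam⁻¹ * ℓ * |(n : ℝ)| - c ≤ dist o ((h ^ n) • o))
    (a s : ℝ) (ha : 1 < a) (hs : 0 < s)
    (D : Quotient (QuotientGroup.rightRel (Subgroup.zpowers h)) → ℝ)
    (hD : ∀ g : G, D (Quotient.mk (QuotientGroup.rightRel (Subgroup.zpowers h)) g) =
      ⨅ n : ℤ, dist o ((h ^ n * g) • o)) :
    ∃ A > (0:ℝ),
      ∑' g : G, ENNReal.ofReal (a ^ (-(s * dist o (g • o)))) ≤
        ENNReal.ofReal A *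
          ∑' q : Quotient (QuotientGroup.rightRel (Subgroup.zpowers h)),
            ENNReal.ofReal (a ^ (-(s * D q))) := by
  have : IsIsometricSMul G X := ⟨hiso⟩
  obtain ⟨σ, hσ, C, hC, hu⟩ :=
    exists_dist_zpow_smul_bounds (mul_pos (inv_pos.2 (by linarith)) hℓpos) o h hqg
  set r := ENNReal.ofReal (a ^ (-(s * (σ / 4))))
  set B := ENNReal.ofReal (a ^ (s * (6 * (σ + C + 1 + δ)))) * ((1 + r) * (1 - r)⁻¹)
  have hr : r < 1 := ENNReal.ofReal_lt_one.2 (Real.rpow_lt_one_of_one_lt_of_neg ha (by nlinarith))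
  have hB0 : B ≠ 0 := mul_ne_zero (ENNReal.ofReal_pos.2 (by positivity)).ne'
    (mul_ne_zero (by simp) (ENNReal.inv_ne_zero.2 (by simp)))
  have hBtop : B ≠ ⊤ := ENNReal.mul_ne_top ENNReal.ofReal_ne_top
    (ENNReal.mul_ne_top (by simp [r]) (ENNReal.inv_ne_top.2 (tsub_pos_of_lt hr).ne'))
  refine ⟨B.toReal, ENNReal.toReal_pos hB0 hBtop, ?_⟩
  rw [ENNReal.ofReal_toReal hBtop, tsum_eq_tsum_quotient_rightRel_zpowers
    (not_isOfFinOrder_of_mul_abs_le_dist hσ o fun n => (hu n).1), ← ENNReal.tsum_mul_left]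
  refine ENNReal.tsum_le_tsum fun q => ?_
  obtain ⟨n₁, hn₁⟩ :=
    IsGromovHyperbolic.exists_le_dist_zpow_mul_smul hhyp hδ hσ.le hC o h hu q.out
  have hDq : D q = ⨅ n : ℤ, dist o ((h ^ n * q.out) • o) := by simpa using hD q.out
  rw [hDq]
  exact tsum_ofReal_rpow_neg_le ha.le hs.le n₁ hn₁

/-- Lemma 8.4 of the paper: let `G` be a discrete isometry group of a proper
geodesic `δ`-hyperbolic space (`δ`-hyperbolicity via the four-point Gromov
product condition `hhyp`, geodesicity via midpoints `hmid`), and `h ∈ G` a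
hyperbolic element with quasi-geodesic axis constants `(lam, c)`. For each
right coset `[g] ∈ ⟨h⟩\G` let `D [g] = inf_{n ∈ ℤ} d(o, hⁿ g o)`. Then for
every `s > 0` there is `A > 0` with
`∑_{g ∈ G} a^{-s d(o, g o)} ≤ A ∑_{[g]} a^{-s D[g]}`. -/
theorem coset_poincare_series_bound {X : Type*} [MetricSpace X] [ProperSpace X]
    {G : Type*} [Group G] [MulAction G X]
    (hiso : ∀ g : G, Isometry (fun x : X => g • x))
    (o : X)
    (hmid : ∀ x y : X, ∃ m : X, dist x m = dist x y / 2 ∧ dist m y = dist x y / 2)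
    (δ : ℝ) (hδ : 0 ≤ δ)
    (hhyp : ∀ x y z w : X,
      min ((dist x w + dist y w - dist x y) / 2)
          ((dist y w + dist z w - dist y z) / 2) - δ ≤
        (dist x w + dist z w - dist x z) / 2)
    (hdisc : ∀ R : ℝ, {g : G | dist o (g • o) ≤ R}.Finite)
    (h : G) (ℓ lam c : ℝ) (hℓ : ℓ = dist o (h • o)) (hℓpos : 0 < ℓ)
    (hlam : 1 ≤ lam) (hc : 0 ≤ c)
    (hqg : ∀ n : ℤ, lam⁻¹ * ℓ * |(n : ℝ)| - c ≤ dist o ((h ^ n) • o))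
    (a s : ℝ) (ha : 1 < a) (hs : 0 < s)
    (D : Quotient (QuotientGroup.rightRel (Subgroup.zpowers h)) → ℝ)
    (hD : ∀ g : G, D (Quotient.mk (QuotientGroup.rightRel (Subgroup.zpowers h)) g) =
      ⨅ n : ℤ, dist o ((h ^ n * g) • o)) :
    ∃ A > (0:ℝ),
      ∑' g : G, ENNReal.ofReal (a ^ (-(s * dist o (g • o)))) ≤
        ENNReal.ofReal A *
          ∑' q : Quotient (QuotientGroup.rightRel (Subgroup.zpowers h)),
            ENNReal.ofReal (a ^ (-(s * D q))) :=
  coset_poincare_series_bound_general hiso o δ hδ hhyp h ℓ lam c hℓpos hlam hqg a s ha hs D hD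
end

section
/- Let $\Gamma$ be a non-elementary discrete isometry group of a proper geodesic Gromov hyperbolic space with finite critical exponent, and suppose $\Gamma$ contains a hyperbolic element $h$ whose cyclic group $\langle h\rangle$ is of divergence type with critical exponent $0$, and that the limit set of $\Gamma$ properly contains the two fixed points of $h$. Assuming Coornaert's results (existence of a Patterson measure for any group of finite critical exponent; the support of any quasi-invariant quasiconformal measure of critical dimension for a divergence-type group lies in its limit set), conclude that $e_a(\Gamma)>0$. -/
open MeasureTheory
open scoped ENNReal

/-- `μ` is an `s`-dimensional quasi-invariant quasiconformal measure for the
set `S` of isometries, with boundary action `ext` and conformal derivative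
cocycle `j`. -/
def QCMeasure {B : Type*} [MeasurableSpace B] {G : Type*} (S : Set G)
    (ext : G → B → B) (j : G → B → ℝ) (s : ℝ) (μ : Measure B) : Prop :=
  ∃ D : ℝ, 1 ≤ D ∧ ∀ g ∈ S, ∀ E : Set B, MeasurableSet E →
    ENNReal.ofReal D⁻¹ * ∫⁻ ξ in E, ENNReal.ofReal (j g ξ ^ s) ∂μ ≤ μ (ext g '' E) ∧
    μ (ext g '' E) ≤ ENNReal.ofReal D * ∫⁻ ξ in E, ENNReal.ofReal (j g ξ ^ s) ∂μ

/-! If `Γ` had critical exponent `0`, its Patterson measure would be a quasiconformal measure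
of dimension `0 = e(⟨h⟩)` for the divergence-type group `⟨h⟩`, hence concentrated on
`Fix(h)`. Since the Patterson measure charges every open set meeting `Λ(Γ)` and the
complement of the two-point set `Fix(h)` is open, this forces `Λ(Γ) ⊆ Fix(h)`, contradicting
that `Λ(Γ)` properly contains `Fix(h)`. -/

theorem QCMeasure.mono {B G : Type*} [MeasurableSpace B] {S T : Set G}
    {ext : G → B → B} {j : G → B → ℝ} {s : ℝ} {μ : Measure B}
    (hST : S ⊆ T) (hμ : QCMeasure T ext j s μ) : QCMeasure S ext j s μ := by
  obtain ⟨D, hD, hT⟩ := hμ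
  exact ⟨D, hD, fun g hg => hT g (hST hg)⟩

theorem subset_of_measure_compl_eq_zero {B : Type*} [MeasurableSpace B] [TopologicalSpace B]
    {μ : Measure B} {Λ F : Set B} (hF : IsClosed F) (hμF : μ Fᶜ = 0)
    (hΛ : ∀ U : Set B, IsOpen U → (U ∩ Λ).Nonempty → 0 < μ U) : Λ ⊆ F := by
  intro ξ hξΛ
  by_contra hξF
  exact (hΛ Fᶜ hF.isOpen_compl ⟨ξ, hξF, hξΛ⟩).ne' hμF

theorem critical_exponent_positive_general {X B : Type*} [MetricSpace X]
    [MeasurableSpace B] [TopologicalSpace B] [T2Space B]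
    (o : X) (Γ : Subgroup (X ≃ᵢ X))
    (ext : (X ≃ᵢ X) → B → B) (j : (X ≃ᵢ X) → B → ℝ)
    (a : ℝ)
    -- the critical exponent of `Γ`, assumed finite:
    (e : ℝ)
    (he : e = sInf {s : ℝ | 0 ≤ s ∧
      ∑' γ : Γ, ENNReal.ofReal (a ^ (-(s * dist o ((γ : X ≃ᵢ X) o)))) < ⊤})
    -- a hyperbolic element `h ∈ Γ` with exactly two boundary fixed points:
    (h : X ≃ᵢ X) (hh : h ∈ Γ)
    (ξ₁ ξ₂ : B) (hFix : {ξ : B | ext h ξ = ξ} = {ξ₁, ξ₂})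
    -- the limit set of `Γ`, non-elementary, properly containing `Fix(h)`:
    (ΛΓ : Set B)
    (hsub : {ξ : B | ext h ξ = ξ} ⊆ ΛΓ) (hproper : {ξ : B | ext h ξ = ξ} ≠ ΛΓ)
    -- Coornaert: existence of a Patterson measure for `Γ` with support `ΛΓ`:
    (hexist : ∃ μ : Measure B, μ ≠ 0 ∧ QCMeasure (Γ : Set (X ≃ᵢ X)) ext j e μ ∧
      μ ΛΓᶜ = 0 ∧ ∀ U : Set B, IsOpen U → (U ∩ ΛΓ).Nonempty → 0 < μ U)
    -- Coornaert: a nonzero quasiconformal measure of dimension `0` for the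
    -- divergence-type group `⟨h⟩` is concentrated on `Fix(h)`:
    (hsupp : ∀ μ : Measure B, μ ≠ 0 →
      QCMeasure ((Subgroup.zpowers h : Subgroup (X ≃ᵢ X)) : Set (X ≃ᵢ X)) ext j 0 μ →
      μ {ξ : B | ext h ξ = ξ}ᶜ = 0) :
    0 < e := by
  have he_nonneg : 0 ≤ e := he ▸ Real.sInf_nonneg fun _ hs => hs.1
  refine he_nonneg.lt_of_ne fun he_zero => hproper ?_
  obtain ⟨μ, hμ, hμΓ, -, hμ_pos⟩ := hexist
  have hμh : QCMeasure ((Subgroup.zpowers h : Subgroup (X ≃ᵢ X)) : Set (X ≃ᵢ X)) ext j 0 μ :=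
    he_zero ▸ hμΓ.mono (Subgroup.zpowers_le.mpr hh)
  have hFix_closed : IsClosed {ξ : B | ext h ξ = ξ} :=
    hFix ▸ ((Set.finite_singleton ξ₂).insert ξ₁).isClosed
  exact hsub.antisymm (subset_of_measure_compl_eq_zero hFix_closed (hsupp μ hμ hμh) hμ_pos)

/-- Proposition 8.6 of the paper: the critical exponent of a non-elementary
discrete isometry group `Γ` is strictly positive. Here `Γ` has finite
critical exponent `e`, contains a hyperbolic element `h` whose cyclic group
`⟨h⟩` is of divergence type with critical exponent `0`, and whose limit set
`ΛΓ` properly contains the two fixed points of `h` on the boundary `B`.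
Coornaert's results are assumed as hypotheses: `hexist` provides a Patterson
measure for `Γ` (a quasi-invariant quasiconformal measure of dimension `e`
with support equal to `ΛΓ`), and `hsupp` states that any nonzero
`⟨h⟩`-quasi-invariant quasiconformal measure of dimension `0` (the critical
exponent of the divergence-type group `⟨h⟩`) is concentrated on the limit set
`Fix(h)` of `⟨h⟩`. -/
theorem critical_exponent_positive {X B : Type*} [MetricSpace X]
    [MeasurableSpace B] [TopologicalSpace B] [T2Space B]
    (o : X) (Γ : Subgroup (X ≃ᵢ X))
    (hdisc : ∀ R : ℝ, {γ : Γ | dist o ((γ : X ≃ᵢ X) o) ≤ R}.Finite)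
    (ext : (X ≃ᵢ X) → B → B) (j : (X ≃ᵢ X) → B → ℝ)
    (a : ℝ) (ha : 1 < a)
    -- the critical exponent of `Γ`, assumed finite:
    (e : ℝ)
    (he : e = sInf {s : ℝ | 0 ≤ s ∧
      ∑' γ : Γ, ENNReal.ofReal (a ^ (-(s * dist o ((γ : X ≃ᵢ X) o)))) < ⊤})
    (hfin : ∃ s : ℝ, 0 ≤ s ∧
      ∑' γ : Γ, ENNReal.ofReal (a ^ (-(s * dist o ((γ : X ≃ᵢ X) o)))) < ⊤)
    -- a hyperbolic element `h ∈ Γ` with exactly two boundary fixed points: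
    (h : X ≃ᵢ X) (hh : h ∈ Γ)
    (ξ₁ ξ₂ : B) (hξ : ξ₁ ≠ ξ₂) (hFix : {ξ : B | ext h ξ = ξ} = {ξ₁, ξ₂})
    -- `⟨h⟩` has critical exponent `0` and is of divergence type:
    (hcyc : ∀ s : ℝ, 0 < s →
      ∑' n : ℤ, ENNReal.ofReal (a ^ (-(s * dist o ((h ^ n : X ≃ᵢ X) o)))) < ⊤)
    (hcycdiv :
      ∑' n : ℤ, ENNReal.ofReal (a ^ (-((0:ℝ) * dist o ((h ^ n : X ≃ᵢ X) o)))) = ⊤)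
    -- the limit set of `Γ`, non-elementary, properly containing `Fix(h)`:
    (ΛΓ : Set B)
    (hnonelem : ∃ p q r : B, p ∈ ΛΓ ∧ q ∈ ΛΓ ∧ r ∈ ΛΓ ∧ p ≠ q ∧ p ≠ r ∧ q ≠ r)
    (hsub : {ξ : B | ext h ξ = ξ} ⊆ ΛΓ) (hproper : {ξ : B | ext h ξ = ξ} ≠ ΛΓ)
    -- Coornaert: existence of a Patterson measure for `Γ` with support `ΛΓ`:
    (hexist : ∃ μ : Measure B, μ ≠ 0 ∧ QCMeasure (Γ : Set (X ≃ᵢ X)) ext j e μ ∧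
      μ ΛΓᶜ = 0 ∧ ∀ U : Set B, IsOpen U → (U ∩ ΛΓ).Nonempty → 0 < μ U)
    -- Coornaert: a nonzero quasiconformal measure of dimension `0` for the
    -- divergence-type group `⟨h⟩` is concentrated on `Fix(h)`:
    (hsupp : ∀ μ : Measure B, μ ≠ 0 →
      QCMeasure ((Subgroup.zpowers h : Subgroup (X ≃ᵢ X)) : Set (X ≃ᵢ X)) ext j 0 μ →
      μ {ξ : B | ext h ξ = ξ}ᶜ = 0) :
    0 < e :=
  critical_exponent_positive_general o Γ ext j a e he h hh ξ₁ ξ₂ hFix ΛΓ hsub hproper hexist hsupp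
end
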